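/- Let φ ∈ [0,1) and let f : ℕ → ℝ be such that Δf(n) → ψ ∈ ℝ as n → ∞. If (1/N) ∑_{n=1}^{N} |Δf(n) + φ| → 0 as N → ∞ and yₙ = e(f(n)) for n ≥ 1, then every solution of the difference equation x_{n+1} = e(−φ)·xₙ + yₙ (n ≥ 1) is unbounded, i.e. {e(f(n))}_{n≥1} ∉ 𝕎_φ. -/

import Mathlib

open Filter

/-- `e(x) = e^{2πix}`. -/
noncomputable def e (x : ℝ) : ℂ := Complex.exp (2 * Real.pi * Complex.I * x)

/-- `𝕎_φ`: the set of sequences `{yₙ}` such that every solution of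
`x_{n+1} = e(−φ)xₙ + yₙ` (n ≥ 1) is bounded. -/
def memW (φ : ℝ) (y : ℕ → ℂ) : Prop :=
  ∀ x : ℕ → ℂ, (∀ n, 1 ≤ n → x (n + 1) = e (-φ) * x n + y n) →
    ∃ C : ℝ, ∀ n, 1 ≤ n → ‖x n‖ ≤ C

open Finset Topology

/-!
Suppose every solution is bounded. The solution `x n = e (-n φ) ∑_{k < n} e ((k + 1) φ) e (f k)`
then bounds, by some `C`, all interval sums of `e (g k)` with `g k = (k + 1) φ + f k`. Since
`Δg = Δf + φ`, the Cesàro means of `|Δg|` tend to `0`, so for any `L` some window of `L`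
consecutive integers has total variation of `g` at most `1/8`. On it all `e (g k)` lie within
angle `π/4` of `e (g M)`, so their sum has modulus at least `L / 2`; `L > 2 C` is absurd.
-/

lemma e_eq_exp_ofReal_mul_I (x : ℝ) : e x = Complex.exp ((2 * Real.pi * x : ℝ) * Complex.I) := by
  rw [e]; push_cast; ring_nf

lemma e_zero : e 0 = 1 := by
  simp [e]

lemma e_add (a b : ℝ) : e (a + b) = e a * e b := by
  unfold e; rw [← Complex.exp_add]; push_cast; ring_nf

lemma norm_e (x : ℝ) : ‖e x‖ = 1 := by
  rw [e_eq_exp_ofReal_mul_I, Complex.norm_exp_ofReal_mul_I]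

lemma re_e (x : ℝ) : (e x).re = Real.cos (2 * Real.pi * x) := by
  rw [e_eq_exp_ofReal_mul_I, Complex.exp_ofReal_mul_I_re]

lemma half_le_re_e {t : ℝ} (ht : |t| ≤ 1 / 8) : 1 / 2 ≤ (e t).re := by
  have hθ : |2 * Real.pi * t| ≤ 1 := by
    rw [abs_mul, abs_of_pos Real.two_pi_pos]
    nlinarith [Real.pi_lt_d2, abs_nonneg t]
  rw [re_e]
  nlinarith [Real.one_sub_sq_div_two_le_cos (x := 2 * Real.pi * t), sq_abs (2 * Real.pi * t),
    abs_nonneg (2 * Real.pi * t)]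

lemma card_le_two_mul_norm_sum_e {ι : Type*} (s : Finset ι) (θ : ι → ℝ) (c : ℝ)
    (h : ∀ i ∈ s, |θ i - c| ≤ 1 / 8) : (#s : ℝ) ≤ 2 * ‖∑ i ∈ s, e (θ i)‖ := by
  have hre : ∑ _i ∈ s, (1 / 2 : ℝ) ≤ (e (-c) * ∑ i ∈ s, e (θ i)).re := by
    rw [mul_sum, Complex.re_sum]
    refine sum_le_sum fun i hi => ?_
    rw [← e_add, neg_add_eq_sub]
    exact half_le_re_e (h i hi)
  rw [sum_const, nsmul_eq_mul] at hre
  have hnorm : (e (-c) * ∑ i ∈ s, e (θ i)).re ≤ ‖∑ i ∈ s, e (θ i)‖ := by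
    simpa only [norm_mul, norm_e, one_mul] using Complex.re_le_norm (e (-c) * ∑ i ∈ s, e (θ i))
  linarith

lemma norm_sub_le_sum_Ico_norm_sub {E : Type*} [SeminormedAddCommGroup E] (g : ℕ → E)
    {M n N : ℕ} (hMn : M ≤ n) (hnN : n ≤ N) :
    ‖g n - g M‖ ≤ ∑ k ∈ Ico M N, ‖g (k + 1) - g k‖ :=
  calc ‖g n - g M‖ = ‖∑ k ∈ Ico M n, (g (k + 1) - g k)‖ := by rw [sum_Ico_sub g hMn]
    _ ≤ ∑ k ∈ Ico M n, ‖g (k + 1) - g k‖ := norm_sum_le _ _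
    _ ≤ ∑ k ∈ Ico M N, ‖g (k + 1) - g k‖ :=
      sum_le_sum_of_subset_of_nonneg (Ico_subset_Ico_right hnN) fun _ _ _ => norm_nonneg _

/-- Otherwise the `J` consecutive windows of length `L` starting at `1` would force the mean at
`N = J * L` to be at least `δ / L`. -/
lemma exists_sum_Ico_le_of_tendsto_avg {u : ℕ → ℝ}
    (hu : Tendsto (fun N : ℕ => (1 / (N : ℝ)) * ∑ n ∈ Icc 1 N, u n) atTop (𝓝 0))
    (L : ℕ) {δ : ℝ} (hδ : 0 < δ) : ∃ M, ∑ n ∈ Ico M (M + L), u n ≤ δ := by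
  rcases Nat.eq_zero_or_pos L with rfl | hL
  · exact ⟨0, by simpa using hδ.le⟩
  by_contra! hwin
  have hmass : ∀ J : ℕ, J * δ ≤ ∑ n ∈ Ico 1 (1 + J * L), u n := by
    intro J
    induction J with
    | zero => simp
    | succ J ih =>
      rw [show 1 + (J + 1) * L = 1 + J * L + L by ring,
        ← sum_Ico_consecutive _ (Nat.le_add_right 1 (J * L)) (Nat.le_add_right _ L)]
      push_cast
      linarith [hwin (1 + J * L)]
  have hLpos : (0 : ℝ) < L := by exact_mod_cast hL
  obtain ⟨N₀, hN₀⟩ := eventually_atTop.mp (hu.eventually (gt_mem_nhds (div_pos hδ hLpos)))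
  set J := N₀ + 1
  have hlt := hN₀ (J * L) (le_trans (Nat.le_succ N₀) (Nat.le_mul_of_pos_right J hL))
  have hpos : (0 : ℝ) < (J * L : ℕ) := by positivity
  rw [← Ico_add_one_right_eq_Icc, add_comm, one_div_mul_eq_div,
    div_lt_div_iff₀ hpos hLpos] at hlt
  push_cast at hlt
  nlinarith [hmass J]

lemma memW.exists_norm_sum_Ico_le {φ : ℝ} {y : ℕ → ℂ} (hy : memW φ y) :
    ∃ C, ∀ M N : ℕ, ‖∑ k ∈ Ico M N, e ((k + 1) * φ) * y k‖ ≤ C := by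
  set S : ℕ → ℂ := fun n => ∑ k ∈ range n, e ((k + 1) * φ) * y k
  obtain ⟨C, hC⟩ := hy (fun n => e (-n * φ) * S n) fun n _ => by
    simp only [S, sum_range_succ, mul_add, ← mul_assoc, ← e_add]
    push_cast
    ring_nf
    rw [e_zero, one_mul]
  have hS : ∀ n, ‖S n‖ ≤ C := by
    rintro (_ | n)
    · simpa [S] using (norm_nonneg _).trans (hC 1 le_rfl)
    · simpa [norm_e] using hC (n + 1) (Nat.le_add_left 1 n)
  refine ⟨2 * C, fun M N => ?_⟩
  rcases le_total M N with hMN | hNM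
  · rw [sum_Ico_eq_sub _ hMN]
    linarith [norm_sub_le (S N) (S M), hS N, hS M]
  · rw [Ico_eq_empty_of_le hNM, sum_empty, norm_zero]
    linarith [(norm_nonneg _).trans (hS 0)]

theorem stmt_12_general (φ : ℝ) (f : ℕ → ℝ)
    (havg : Tendsto
      (fun N : ℕ => (1 / (N : ℝ)) * ∑ n ∈ Finset.Icc 1 N, |f (n + 1) - f n + φ|)
      atTop (nhds 0)) :
    ¬ memW φ (fun n => e (f n)) := by
  intro hW
  set g : ℕ → ℝ := fun k => (k + 1) * φ + f k
  have hΔg : ∀ n, ‖g (n + 1) - g n‖ = |f (n + 1) - f n + φ| := fun n => by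
    rw [Real.norm_eq_abs]; congr 1; simp only [g]; push_cast; ring
  obtain ⟨C, hC⟩ := hW.exists_norm_sum_Ico_le
  obtain ⟨L, hL⟩ := exists_nat_gt (2 * C)
  obtain ⟨M, hM⟩ := exists_sum_Ico_le_of_tendsto_avg (u := fun n => ‖g (n + 1) - g n‖)
    (by simpa only [hΔg] using havg) L (by norm_num : (0 : ℝ) < 1 / 8)
  have hphase : ∀ n ∈ Ico M (M + L), |g n - g M| ≤ 1 / 8 := fun n hn =>
    (norm_sub_le_sum_Ico_norm_sub g (mem_Ico.mp hn).1 (mem_Ico.mp hn).2.le).trans hM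
  have hlarge := card_le_two_mul_norm_sum_e _ g (g M) hphase
  simp only [Nat.card_Ico, add_tsub_cancel_left, g, e_add] at hlarge
  linarith [hC M (M + L)]

/-- if `Δf(n) → ψ` and `(1/N) ∑_{n=1}^{N} |Δf(n) + φ| → 0`, then
`{e(f(n))}_{n≥1} ∉ 𝕎_φ`, i.e. every solution of the corresponding equation is
unbounded. -/
theorem stmt_12 (φ : ℝ) (hφ0 : 0 ≤ φ) (hφ1 : φ < 1) (f : ℕ → ℝ)
    (ψ : ℝ) (hψ : Tendsto (fun n : ℕ => f (n + 1) - f n) atTop (nhds ψ))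
    (havg : Tendsto
      (fun N : ℕ => (1 / (N : ℝ)) * ∑ n ∈ Finset.Icc 1 N, |f (n + 1) - f n + φ|)
      atTop (nhds 0)) :
    ¬ memW φ (fun n => e (f n)) :=
  stmt_12_general φ f havg
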